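/- arXiv:1609.04912 — 4 statements merged into one kernel-verified Lean document; each statement's English description precedes it below -/
import Mathlib

section
/- On the upper half-plane with hyperbolic distance d, let S_H = {(y,0) : y > 0} be the geodesic given by the positive imaginary axis, and let z = (y, w). Then the hyperbolic distance from z to S_H equals arcsinh(|w|/y), and the nearest point on S_H is (√(y² + w²), 0). -/
/-- Inverse hyperbolic cosine, `arcosh t = log(t + √(t² - 1))`. -/
noncomputable def arcosh (t : ℝ) : ℝ := Real.log (t + Real.sqrt (t ^ 2 - 1))

/-- The hyperbolic distance on the upper half-plane `{(y, w) : y > 0}` with metric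
`y^{-2}(dy² + dw²)`, given by `cosh d = 1 + ((y₁-y₂)² + (w₁-w₂)²)/(2 y₁ y₂)`. -/
noncomputable def hDist (p q : ℝ × ℝ) : ℝ :=
  arcosh (1 + ((p.1 - q.1) ^ 2 + (p.2 - q.2) ^ 2) / (2 * p.1 * q.1))

/-!
Write `s = √(y² + w²)`. For a point `(η, 0)` of the imaginary axis,
`cosh d((y, w), (η, 0)) = (s² + η²) / (2yη) ≥ s / y` by AM-GM, with equality exactly at `η = s`.
Since `arcosh` is monotone and `s / y = √(1 + (w/y)²)`, the least distance is
`arcosh √(1 + (w/y)²) = arsinh (|w|/y)`, attained at `(s, 0)`.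
-/

lemma arcosh_le_arcosh {a b : ℝ} (ha : 1 ≤ a) (hab : a ≤ b) : arcosh a ≤ arcosh b := by
  unfold arcosh
  apply Real.log_le_log (by positivity)
  gcongr

lemma arcosh_sqrt_one_add_sq (x : ℝ) : arcosh √(1 + x ^ 2) = Real.arsinh |x| := by
  rw [arcosh, Real.sq_sqrt (by positivity), add_sub_cancel_left, Real.sqrt_sq_eq_abs,
    Real.arsinh, sq_abs, add_comm]

lemma hDist_imaginaryAxis {y w a η : ℝ} (hy : y ≠ 0) (hη : η ≠ 0)
    (ha : a ^ 2 = y ^ 2 + w ^ 2) :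
    hDist (y, w) (η, 0) = arcosh ((a ^ 2 + η ^ 2) / (2 * y * η)) := by
  rw [hDist, ha]
  congr 1
  field_simp
  ring

lemma div_le_sq_add_sq_div {a y η : ℝ} (hy : 0 < y) (hη : 0 < η) :
    a / y ≤ (a ^ 2 + η ^ 2) / (2 * y * η) := by
  rw [div_le_div_iff₀ hy (by positivity)]
  nlinarith [sq_nonneg (a - η)]

lemma sq_add_sq_div_self {a y : ℝ} (hy : y ≠ 0) (ha : a ≠ 0) :
    (a ^ 2 + a ^ 2) / (2 * y * a) = a / y := by
  field_simp
  ring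

section

variable {y : ℝ} (w : ℝ) (hy : 0 < y)
include hy

lemma hDist_foot_imaginaryAxis :
    hDist (y, w) (√(y ^ 2 + w ^ 2), 0) = Real.arsinh (|w| / y) := by
  have hs : 0 < √(y ^ 2 + w ^ 2) := Real.sqrt_pos.mpr (by positivity)
  have hs2 : √(y ^ 2 + w ^ 2) ^ 2 = y ^ 2 + w ^ 2 := Real.sq_sqrt (by positivity)
  have hquot : √(y ^ 2 + w ^ 2) / y = √(1 + (w / y) ^ 2) := by
    rw [← Real.sqrt_sq hy.le, ← Real.sqrt_div' _ (sq_nonneg y), Real.sqrt_sq hy.le]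
    congr 1
    field_simp
  rw [hDist_imaginaryAxis hy.ne' hs.ne' hs2, sq_add_sq_div_self hy.ne' hs.ne', hquot,
    arcosh_sqrt_one_add_sq, abs_div, abs_of_pos hy]

lemma hDist_foot_le_hDist_imaginaryAxis {η : ℝ} (hη : 0 < η) :
    hDist (y, w) (√(y ^ 2 + w ^ 2), 0) ≤ hDist (y, w) (η, 0) := by
  have hs : 0 < √(y ^ 2 + w ^ 2) := Real.sqrt_pos.mpr (by positivity)
  have hs2 : √(y ^ 2 + w ^ 2) ^ 2 = y ^ 2 + w ^ 2 := Real.sq_sqrt (by positivity)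
  have hys : y ≤ √(y ^ 2 + w ^ 2) := Real.le_sqrt_of_sq_le (by nlinarith)
  rw [hDist_imaginaryAxis hy.ne' hs.ne' hs2, hDist_imaginaryAxis hy.ne' hη.ne' hs2,
    sq_add_sq_div_self hy.ne' hs.ne']
  exact arcosh_le_arcosh ((one_le_div hy).mpr hys) (div_le_sq_add_sq_div hy hη)

end

/-- The hyperbolic distance from `z = (y, w)` to the geodesic
`S_H = {(η, 0) : η > 0}` (the positive imaginary axis) equals `arsinh(|w|/y)`,
and the nearest point of `S_H` is `(√(y² + w²), 0)`. -/
theorem dist_to_imaginary_axis (y w : ℝ) (hy : 0 < y) :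
    sInf {d : ℝ | ∃ η : ℝ, 0 < η ∧ d = hDist (y, w) (η, 0)} =
      Real.arsinh (|w| / y) ∧
    hDist (y, w) (Real.sqrt (y ^ 2 + w ^ 2), 0) = Real.arsinh (|w| / y) := by
  have hfoot := hDist_foot_imaginaryAxis w hy
  refine ⟨IsLeast.csInf_eq ⟨?_, ?_⟩, hfoot⟩
  · exact ⟨_, Real.sqrt_pos.mpr (by positivity), hfoot.symm⟩
  · rintro d ⟨η, hη, rfl⟩
    exact hfoot ▸ hDist_foot_le_hDist_imaginaryAxis w hy hη
end

section
/- In the Fermi normal coordinates (η, w', x) with x ∈ ℝ^r on the collar of a totally geodesic hyperbolic m-manifold M inside a hyperbolic n-manifold N (r = n - m), the Riemannian volume element of N factors as (η^{-m} dη d^{m-1}w') · ((1+|x|²)^{(m-1)/2} d^r x), where the first factor is the hyperbolic volume element of M. -/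
/-!
The map `fermiMap` is the composite of two changes of variables, each linear in one factor of a
product: the fibre dilation `(y, w', x) ↦ (y, w', y • x)`, with Jacobian `y ^ r`, and, at fixed
`x`, the radial rescaling `η ↦ η / √(1 + |x|²)` of the first coordinate, with Jacobian
`(1 + |x|²) ^ (-1/2)`. By Tonelli each reduces to the scaling formula for a Haar measure, and the
two Jacobians turn the weight `y ^ (-(k + 1 + r))` into `η ^ (-(k + 1)) * (1 + |x|²) ^ (k / 2)`.
-/

open MeasureTheory ENNReal

/-- Coordinates: first slot is `y` (resp. `η`), second is `w' ∈ ℝ^{m-1}` (`k = m-1`),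
third is `w'' ∈ ℝ^r` (resp. the Fermi transverse variable `x ∈ ℝ^r`). -/
abbrev Coords (k r : ℕ) := ℝ × (Fin k → ℝ) × (Fin r → ℝ)

/-- The inverse Fermi coordinate map `(η, w', x) ↦ (y, w', w'')` with
`y = η/√(1+|x|²)` and `w'' = η x/√(1+|x|²)` (so that `η = √(y²+|w''|²)`, `x = w''/y`). -/
noncomputable def fermiMap {k r : ℕ} (q : Coords k r) : Coords k r :=
  (q.1 / Real.sqrt (1 + ∑ j, q.2.2 j ^ 2), q.2.1,
    fun j => q.1 * q.2.2 j / Real.sqrt (1 + ∑ j, q.2.2 j ^ 2))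

open Module Set

section Scaling

variable {E : Type*} [NormedAddCommGroup E] [NormedSpace ℝ E] [FiniteDimensional ℝ E]
  [MeasurableSpace E] [BorelSpace E] (μ : Measure E) [μ.IsAddHaarMeasure]

theorem lintegral_eq_ofReal_pow_finrank_mul_lintegral_comp_smul {g : E → ℝ≥0∞}
    (hg : Measurable g) {c : ℝ} (hc : 0 < c) :
    ∫⁻ x, g x ∂μ = ENNReal.ofReal (c ^ finrank ℝ E) * ∫⁻ x, g (c • x) ∂μ := by
  rw [← lintegral_map hg (measurable_const_smul c), Measure.map_addHaar_smul μ hc.ne',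
    lintegral_smul_measure, smul_eq_mul, ← mul_assoc, ← ENNReal.ofReal_mul (by positivity),
    abs_of_pos (by positivity), mul_inv_cancel₀ (by positivity), ENNReal.ofReal_one, one_mul]

end Scaling

theorem setLIntegral_Ioi_eq_ofReal_mul_setLIntegral_comp_mul {g : ℝ → ℝ≥0∞}
    (hg : Measurable g) {c : ℝ} (hc : 0 < c) :
    ∫⁻ y in Ioi 0, g y = ENNReal.ofReal c * ∫⁻ η in Ioi 0, g (c * η) := by
  have h := lintegral_eq_ofReal_pow_finrank_mul_lintegral_comp_smul volume
    (hg.indicator (measurableSet_Ioi (a := 0))) hc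
  have hind : ∀ η : ℝ, (Ioi 0).indicator g (c * η) = (Ioi 0).indicator (fun η => g (c * η)) η :=
    fun η => by simp only [indicator, mem_Ioi, mul_pos_iff_of_pos_left hc]
  simpa only [lintegral_indicator measurableSet_Ioi, finrank_self, pow_one, smul_eq_mul, hind]
    using h

section HalfSpace

variable {β : Type*} [MeasureSpace β] [SFinite (volume : Measure β)]

theorem volume_restrict_fst_pos :
    (volume : Measure (ℝ × β)).restrict {p | 0 < p.1} = (volume.restrict (Ioi 0)).prod volume := by
  rw [Measure.volume_eq_prod, Measure.restrict_prod_eq_prod_univ, prod_univ]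
  rfl

theorem setLIntegral_fst_pos_eq_comp_mul_fst {F : ℝ × β → ℝ≥0∞} (hF : Measurable F)
    {c : β → ℝ} (hc : Measurable c) (hc_pos : ∀ b, 0 < c b) :
    ∫⁻ p in {p : ℝ × β | 0 < p.1}, F p =
      ∫⁻ q in {q : ℝ × β | 0 < q.1}, ENNReal.ofReal (c q.2) * F (c q.2 * q.1, q.2) := by
  rw [volume_restrict_fst_pos, lintegral_prod_symm _ hF.aemeasurable,
    lintegral_prod_symm _ (by fun_prop)]
  refine lintegral_congr fun b => ?_
  rw [setLIntegral_Ioi_eq_ofReal_mul_setLIntegral_comp_mul (by fun_prop) (hc_pos b)]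
  exact (lintegral_const_mul _ (by fun_prop)).symm

variable {α E : Type*} [MeasureSpace α] [SFinite (volume : Measure α)]
  [NormedAddCommGroup E] [NormedSpace ℝ E] [FiniteDimensional ℝ E] [MeasureSpace E]
  [BorelSpace E] [(volume : Measure E).IsAddHaarMeasure]

theorem setLIntegral_fst_pos_eq_comp_smul_snd_snd {F : ℝ × α × E → ℝ≥0∞} (hF : Measurable F) :
    ∫⁻ p in {p : ℝ × α × E | 0 < p.1}, F p =
      ∫⁻ q in {q : ℝ × α × E | 0 < q.1},
        ENNReal.ofReal (q.1 ^ finrank ℝ E) * F (q.1, q.2.1, q.1 • q.2.2) := by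
  rw [volume_restrict_fst_pos, lintegral_prod _ hF.aemeasurable,
    lintegral_prod _ (by fun_prop)]
  refine setLIntegral_congr_fun measurableSet_Ioi fun y hy => ?_
  rw [Measure.volume_eq_prod, lintegral_prod _ (by fun_prop), lintegral_prod _ (by fun_prop)]
  refine lintegral_congr fun a => ?_
  rw [lintegral_eq_ofReal_pow_finrank_mul_lintegral_comp_smul volume (by fun_prop) hy]
  exact (lintegral_const_mul _ (by fun_prop)).symm

end HalfSpace

theorem fermiMap_eq {k r : ℕ} (q : Coords k r) :
    fermiMap q = ((√(1 + ∑ j, q.2.2 j ^ 2))⁻¹ * q.1, q.2.1,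
      ((√(1 + ∑ j, q.2.2 j ^ 2))⁻¹ * q.1) • q.2.2) := by
  ext
  · exact div_eq_inv_mul _ _
  · rfl
  · simp only [fermiMap, Pi.smul_apply, smul_eq_mul]
    ring

theorem inv_sqrt_mul_rpow_eq (k r : ℕ) {η t : ℝ} (hη : 0 < η) (ht : 0 < t) :
    (√t)⁻¹ * (((√t)⁻¹ * η) ^ r * ((√t)⁻¹ * η) ^ (-((k : ℝ) + 1 + r))) =
      η ^ (-((k : ℝ) + 1)) * t ^ ((k : ℝ) / 2) := by
  have hs : (√t)⁻¹ = t ^ (-(1 / 2) : ℝ) := by rw [Real.sqrt_eq_rpow, Real.rpow_neg ht.le]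
  rw [hs, ← Real.rpow_natCast, ← Real.rpow_add (by positivity),
    Real.mul_rpow (by positivity) hη.le, ← Real.rpow_mul ht.le, ← mul_assoc,
    ← Real.rpow_add ht, mul_comm]
  ring_nf

/-- In Fermi normal coordinates `(η, w', x)` around a totally geodesic hyperbolic
`m`-manifold (`m = k+1`) inside a hyperbolic `n`-manifold (`n = m + r`), the hyperbolic
volume element `y^{-n} dy dw' dw''` becomes `η^{-m} (1+|x|²)^{(m-1)/2} dη dw' dx`. -/
theorem fermi_volume_factorization (k r : ℕ)
    (f : Coords k r → ℝ≥0∞) (hf : Measurable f) :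
    ∫⁻ p in {p : Coords k r | 0 < p.1}, f p *
        ENNReal.ofReal (p.1 ^ (-((k : ℝ) + 1 + r))) ∂volume =
      ∫⁻ q in {q : Coords k r | 0 < q.1}, f (fermiMap q) *
        ENNReal.ofReal (q.1 ^ (-((k : ℝ) + 1)) *
          (1 + ∑ j, q.2.2 j ^ 2) ^ ((k : ℝ) / 2)) ∂volume := by
  rw [setLIntegral_fst_pos_eq_comp_smul_snd_snd (by fun_prop),
    setLIntegral_fst_pos_eq_comp_mul_fst (c := fun w => (√(1 + ∑ j, w.2 j ^ 2))⁻¹)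
      (by fun_prop) (by fun_prop) fun w => inv_pos.2 (Real.sqrt_pos.2 (by positivity))]
  refine setLIntegral_congr_fun (measurableSet_lt measurable_const measurable_fst)
    fun q (hq : 0 < q.1) => ?_
  simp only [finrank_fin_fun, fermiMap_eq]
  rw [← inv_sqrt_mul_rpow_eq k r hq (by positivity), ENNReal.ofReal_mul (by positivity),
    ENNReal.ofReal_mul (by positivity)]
  ring
end

section
/- In Fermi coordinates (η, w', x), x ∈ ℝ^r, around a totally geodesic hyperbolic submanifold M of a hyperbolic manifold N, the Laplace–Beltrami operator of N decomposes as Δ_N = (1+|x|²)^{-1} Δ_M + Δ_x + (x·∂_x)² + (n-1)(x·∂_x), where Δ_M is the Laplacian of M, Δ_x the Euclidean Laplacian in x, and x·∂_x = Σᵢ xᵢ ∂/∂xᵢ. -/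
open Real

/-- Coordinates: first slot is `η` (resp. `y`), second `w' ∈ ℝ^{m-1}` (`k = m-1`),
third the transverse variable `x ∈ ℝ^r` (resp. `w'' ∈ ℝ^r`). -/
abbrev Pt (k r : ℕ) := ℝ × (Fin k → ℝ) × (Fin r → ℝ)

/-- Partial derivative in the first variable. -/
noncomputable def D1 {k r : ℕ} (F : Pt k r → ℝ) (p : Pt k r) : ℝ :=
  deriv (fun s => F (s, p.2.1, p.2.2)) p.1

/-- Partial derivative in the `i`-th coordinate of the second variable. -/
noncomputable def D2 {k r : ℕ} (F : Pt k r → ℝ) (i : Fin k) (p : Pt k r) : ℝ :=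
  deriv (fun s => F (p.1, Function.update p.2.1 i s, p.2.2)) (p.2.1 i)

/-- Partial derivative in the `j`-th coordinate of the third variable. -/
noncomputable def D3 {k r : ℕ} (F : Pt k r → ℝ) (j : Fin r) (p : Pt k r) : ℝ :=
  deriv (fun s => F (p.1, p.2.1, Function.update p.2.2 j s)) (p.2.2 j)

/-- The Laplacian `Δ_M = (η∂_η)² - (m-1)(η∂_η) + η² Δ_{w'}` of the totally geodesic
hyperbolic `m`-manifold (`m = k+1`), acting in the `(η, w')` variables. -/
noncomputable def lapM {k r : ℕ} (F : Pt k r → ℝ) (p : Pt k r) : ℝ :=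
  p.1 * D1 (fun q => q.1 * D1 F q) p - (k : ℝ) * (p.1 * D1 F p) +
    p.1 ^ 2 * ∑ i, D2 (fun q => D2 F i q) i p

/-- The Euclidean Laplacian `Δ_x` in the transverse variable. -/
noncomputable def lapX {k r : ℕ} (F : Pt k r → ℝ) (p : Pt k r) : ℝ :=
  ∑ j, D3 (fun q => D3 F j q) j p

/-- The radial operator `x·∂_x = Σⱼ xⱼ ∂/∂xⱼ` in the transverse variable. -/
noncomputable def xDx {k r : ℕ} (F : Pt k r → ℝ) (p : Pt k r) : ℝ :=
  ∑ j, p.2.2 j * D3 F j p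

/-- The hyperbolic Laplacian `Δ_N = (y∂_y)² - (n-1)(y∂_y) + y²(Δ_{w'} + Δ_{w''})`
of the ambient hyperbolic `n`-manifold (`n = k + 1 + r`) in upper half-space
coordinates `(y, w', w'')`. -/
noncomputable def lapN {k r : ℕ} (G : Pt k r → ℝ) (p : Pt k r) : ℝ :=
  p.1 * D1 (fun q => q.1 * D1 G q) p - ((k : ℝ) + r) * (p.1 * D1 G p) +
    p.1 ^ 2 * (∑ i, D2 (fun q => D2 G i q) i p + ∑ j, D3 (fun q => D3 G j q) j p)

/-- The Fermi coordinate map `(y, w', w'') ↦ (η, w', x)` with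
`η = √(y² + |w''|²)`, `x = w''/y`. -/
noncomputable def toFermi {k r : ℕ} (p : Pt k r) : Pt k r :=
  (Real.sqrt (p.1 ^ 2 + ∑ j, p.2.2 j ^ 2), p.2.1, fun j => p.2.2 j / p.1)

noncomputable def pd {k r : ℕ} (v : Pt k r) (F : Pt k r → ℝ) (p : Pt k r) : ℝ :=
  fderiv ℝ F p v

def e1 {k r : ℕ} : Pt k r := (1, 0, 0)
def e2 {k r : ℕ} (i : Fin k) : Pt k r := (0, Pi.single i 1, 0)
def e3 {k r : ℕ} (j : Fin r) : Pt k r := (0, 0, Pi.single j 1)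

lemma pd_contDiff {k r : ℕ} (v : Pt k r) {F : Pt k r → ℝ} (hF : ContDiff ℝ (⊤ : ℕ∞) F) :
    ContDiff ℝ (⊤ : ℕ∞) (pd v F) := by
  have h1 : ContDiff ℝ (⊤ : ℕ∞) (fderiv ℝ F) := hF.fderiv_right (le_refl _)
  exact (ContinuousLinearMap.apply ℝ ℝ v).contDiff.comp h1

lemma clm_expand {k r : ℕ} (L : Pt k r →L[ℝ] ℝ) (a : ℝ) (b : Fin k → ℝ) (c : Fin r → ℝ) :
    L (a, b, c) = a * L e1 + (∑ i, b i * L (e2 i)) + ∑ j, c j * L (e3 j) := by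
  have hv : ((a, b, c) : Pt k r)
      = a • e1 + ((∑ i, b i • e2 i) + ∑ j, c j • e3 j) := by
    refine Prod.ext ?_ (Prod.ext ?_ ?_) <;>
      simp [e1, e2, e3, Prod.fst_sum, Prod.snd_sum, ← Pi.single_smul,
        Finset.univ_sum_single]
  rw [hv, map_add, map_add, map_smul, map_sum, map_sum]
  simp [smul_eq_mul]; ring

section
variable {k r : ℕ}

lemma hasDerivAt_comp_curve {G : Pt k r → ℝ} (hG : ContDiff ℝ (⊤ : ℕ∞) G)
    {c : ℝ → Pt k r} {v : Pt k r} {t : ℝ} (hc : HasDerivAt c v t) :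
    HasDerivAt (fun s => G (c s)) (fderiv ℝ G (c t) v) t := by
  have := (hG.differentiable (by simp) (c t)).hasFDerivAt.comp_hasDerivAt t hc
  exact this

/-- straight-line partials -/
lemma line1 {G : Pt k r → ℝ} (hG : ContDiff ℝ (⊤ : ℕ∞) G) (t : ℝ) (b : Fin k → ℝ)
    (c : Fin r → ℝ) :
    HasDerivAt (fun s => G (s, b, c)) (pd e1 G (t, b, c)) t := by
  have hc : HasDerivAt (fun s : ℝ => ((s, b, c) : Pt k r)) ((1, 0, 0) : Pt k r) t :=
    (hasDerivAt_id t).prodMk ((hasDerivAt_const t b).prodMk (hasDerivAt_const t c))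
  exact hasDerivAt_comp_curve hG hc

lemma line2 {G : Pt k r → ℝ} (hG : ContDiff ℝ (⊤ : ℕ∞) G) (a : ℝ) (i : Fin k)
    (b : Fin k → ℝ) (t : ℝ) (c : Fin r → ℝ) :
    HasDerivAt (fun s => G (a, Function.update b i s, c))
      (pd (e2 i) G (a, Function.update b i t, c)) t := by
  have hc : HasDerivAt (fun s : ℝ => ((a, Function.update b i s, c) : Pt k r))
      ((0, Pi.single i 1, 0) : Pt k r) t :=
    (hasDerivAt_const t a).prodMk ((hasDerivAt_update b i t).prodMk (hasDerivAt_const t c))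
  exact hasDerivAt_comp_curve hG hc

lemma line3 {G : Pt k r → ℝ} (hG : ContDiff ℝ (⊤ : ℕ∞) G) (a : ℝ) (b : Fin k → ℝ)
    (j : Fin r) (c : Fin r → ℝ) (t : ℝ) :
    HasDerivAt (fun s => G (a, b, Function.update c j s))
      (pd (e3 j) G (a, b, Function.update c j t)) t := by
  have hc : HasDerivAt (fun s : ℝ => ((a, b, Function.update c j s) : Pt k r))
      ((0, 0, Pi.single j 1) : Pt k r) t :=
    (hasDerivAt_const t a).prodMk ((hasDerivAt_const t b).prodMk (hasDerivAt_update c j t))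
  exact hasDerivAt_comp_curve hG hc

lemma D1_eq {G : Pt k r → ℝ} (hG : ContDiff ℝ (⊤ : ℕ∞) G) (p : Pt k r) :
    D1 G p = pd e1 G p := (line1 hG p.1 p.2.1 p.2.2).deriv

lemma D2_eq {G : Pt k r → ℝ} (hG : ContDiff ℝ (⊤ : ℕ∞) G) (i : Fin k) (p : Pt k r) :
    D2 G i p = pd (e2 i) G p := by
  unfold D2
  have := (line2 hG p.1 i p.2.1 (p.2.1 i) p.2.2).deriv
  rwa [Function.update_eq_self] at this

lemma D3_eq {G : Pt k r → ℝ} (hG : ContDiff ℝ (⊤ : ℕ∞) G) (j : Fin r) (p : Pt k r) :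
    D3 G j p = pd (e3 j) G p := by
  unfold D3
  have := (line3 hG p.1 p.2.1 j p.2.2 (p.2.2 j)).deriv
  rwa [Function.update_eq_self] at this

lemma pd_symm {F : Pt k r → ℝ} (hF : ContDiff ℝ (⊤ : ℕ∞) F) (u v : Pt k r) (p : Pt k r) :
    pd u (pd v F) p = pd v (pd u F) p := by
  have hd : Differentiable ℝ (fderiv ℝ F) :=
    (hF.fderiv_right (m := (⊤ : ℕ∞)) (le_refl _)).differentiable (by simp)
  have key : ∀ w : Pt k r, pd w F = fun q => (ContinuousLinearMap.apply ℝ ℝ w) (fderiv ℝ F q) :=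
    fun w => rfl
  have hfd : ∀ w q, fderiv ℝ (pd w F) q
      = (ContinuousLinearMap.apply ℝ ℝ w).comp (fderiv ℝ (fderiv ℝ F) q) := by
    intro w q
    rw [key w]
    exact (((ContinuousLinearMap.apply ℝ ℝ w).hasFDerivAt.comp q
      (hd q).hasFDerivAt)).fderiv
  have hsymm := second_derivative_symmetric
    (f := F) (f' := fderiv ℝ F) (f'' := fderiv ℝ (fderiv ℝ F) p)
    (fun q => (hF.differentiable (by simp) q).hasFDerivAt) (hd p).hasFDerivAt u v
  show fderiv ℝ (pd v F) p u = fderiv ℝ (pd u F) p v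
  rw [hfd v p, hfd u p]
  simpa using hsymm

lemma eta_pos {r : ℕ} (y : ℝ) (hy : 0 < y) (w'' : Fin r → ℝ) :
    0 < Real.sqrt (y ^ 2 + ∑ j, w'' j ^ 2) := by
  apply Real.sqrt_pos.2
  have : (0:ℝ) ≤ ∑ j, w'' j ^ 2 := Finset.sum_nonneg fun j _ => sq_nonneg _
  nlinarith

lemma fermi1 {G : Pt k r → ℝ} (hG : ContDiff ℝ (⊤ : ℕ∞) G) (y : ℝ) (hy : 0 < y)
    (w' : Fin k → ℝ) (w'' : Fin r → ℝ) :
    HasDerivAt (fun s => G (toFermi (s, w', w'')))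
      ((y / Real.sqrt (y ^ 2 + ∑ j, w'' j ^ 2)) * pd e1 G (toFermi (y, w', w''))
        - ∑ j, (w'' j / y ^ 2) * pd (e3 j) G (toFermi (y, w', w''))) y := by
  set S := ∑ j, w'' j ^ 2 with hS
  have hpos : (0:ℝ) < y ^ 2 + S := by
    have : (0:ℝ) ≤ S := Finset.sum_nonneg fun j _ => sq_nonneg _
    nlinarith
  have hη := eta_pos y hy w''
  have hsqrt : HasDerivAt (fun s : ℝ => Real.sqrt (s ^ 2 + S))
      (y / Real.sqrt (y ^ 2 + S)) y := by
    have h1 : HasDerivAt (fun s : ℝ => s ^ 2 + S) (2 * y) y := by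
      simpa using (hasDerivAt_pow 2 y).add_const S
    have := h1.sqrt hpos.ne'
    convert this using 1
    rw [eq_div_iff (by positivity)]
    field_simp
  have hpi : HasDerivAt (fun s : ℝ => (fun j => w'' j / s : Fin r → ℝ))
      (fun j => -(w'' j) / y ^ 2) y := by
    rw [hasDerivAt_pi]
    intro j
    have := (hasDerivAt_const y (w'' j)).fun_div (hasDerivAt_id y) hy.ne'
    refine this.congr_deriv ?_
    simp only [id]
    field_simp
    ring
  have hc : HasDerivAt (fun s : ℝ => toFermi ((s, w', w'') : Pt k r))
      ((y / Real.sqrt (y ^ 2 + S), 0, fun j => -(w'' j) / y ^ 2) : Pt k r) y := by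
    exact hsqrt.prodMk ((hasDerivAt_const y w').prodMk hpi)
  have := hasDerivAt_comp_curve hG hc
  rw [clm_expand] at this
  convert this using 1
  simp only [pd, Pi.zero_apply, zero_mul, Finset.sum_const_zero, add_zero, neg_div,
    neg_mul, Finset.sum_neg_distrib, ← sub_eq_add_neg]
lemma fermi3 {G : Pt k r → ℝ} (hG : ContDiff ℝ (⊤ : ℕ∞) G) (y : ℝ) (hy : 0 < y)
    (w' : Fin k → ℝ) (w'' : Fin r → ℝ) (l : Fin r) :
    HasDerivAt (fun s => G (toFermi (y, w', Function.update w'' l s)))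
      ((w'' l / Real.sqrt (y ^ 2 + ∑ j, w'' j ^ 2)) * pd e1 G (toFermi (y, w', w''))
        + (1 / y) * pd (e3 l) G (toFermi (y, w', w''))) (w'' l) := by
  set S := ∑ j, w'' j ^ 2 with hS
  have hpos : (0:ℝ) < y ^ 2 + S := by
    have : (0:ℝ) ≤ S := Finset.sum_nonneg fun j _ => sq_nonneg _
    nlinarith
  have hupd : Function.update w'' l (w'' l) = w'' := Function.update_eq_self l w''
  have hsum : HasDerivAt (fun s : ℝ => y ^ 2 + ∑ j, (Function.update w'' l s j) ^ 2)
      (2 * w'' l) (w'' l) := by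
    have h : ∀ j : Fin r, HasDerivAt (fun s : ℝ => (Function.update w'' l s j) ^ 2)
        ((Pi.single l (2 * w'' l) : Fin r → ℝ) j) (w'' l) := by
      intro j
      rcases eq_or_ne j l with h | h
      · subst h
        simp only [Function.update_self, Pi.single_eq_same]
        simpa using hasDerivAt_pow 2 (w'' j)
      · simp only [Function.update_of_ne h, Pi.single_eq_of_ne h]
        exact hasDerivAt_const _ _
    have h1 := HasDerivAt.fun_sum (fun j (_ : j ∈ Finset.univ) => h j)
    have h2 := h1.const_add (y ^ 2)
    simpa using h2
  have hval : (y ^ 2 + ∑ j, (Function.update w'' l (w'' l) j) ^ 2) = y ^ 2 + S := by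
    rw [hupd]
  have hsqrt : HasDerivAt
      (fun s : ℝ => Real.sqrt (y ^ 2 + ∑ j, (Function.update w'' l s j) ^ 2))
      (w'' l / Real.sqrt (y ^ 2 + S)) (w'' l) := by
    have h2 := hsum.sqrt (by rw [hval]; exact hpos.ne')
    rw [hval] at h2
    convert h2 using 1
    rw [eq_div_iff (by positivity)]
    field_simp
  have hpi : HasDerivAt
      (fun s : ℝ => (fun j => Function.update w'' l s j / y : Fin r → ℝ))
      ((Pi.single l (1 / y) : Fin r → ℝ)) (w'' l) := by
    rw [hasDerivAt_pi]
    intro j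
    rcases eq_or_ne j l with h | h
    · subst h
      simp only [Function.update_self, Pi.single_eq_same]
      exact (hasDerivAt_id _).div_const y
    · simp only [Function.update_of_ne h, Pi.single_eq_of_ne h]
      exact hasDerivAt_const _ _
  have hc : HasDerivAt
      (fun s : ℝ => toFermi ((y, w', Function.update w'' l s) : Pt k r))
      ((w'' l / Real.sqrt (y ^ 2 + S), 0, (Pi.single l (1 / y) : Fin r → ℝ)) : Pt k r) (w'' l) := by
    exact hsqrt.prodMk ((hasDerivAt_const _ w').prodMk hpi)
  have hcomp := hasDerivAt_comp_curve hG hc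
  rw [show toFermi ((y, w', Function.update w'' l (w'' l)) : Pt k r)
      = toFermi (y, w', w'') by rw [hupd]] at hcomp
  rw [clm_expand] at hcomp
  convert hcomp using 1
  simp only [pd, Pi.zero_apply, zero_mul, Finset.sum_const_zero, add_zero]
  rw [Finset.sum_eq_single l
    (fun j _ hj => by rw [Pi.single_eq_of_ne hj, zero_mul]) (by simp)]
  rw [Pi.single_eq_same]

section
variable {k r : ℕ} {F : Pt k r → ℝ}

lemma lapM_eq (hF : ContDiff ℝ (⊤ : ℕ∞) F) (p₀ : Pt k r) :
    lapM F p₀ = p₀.1 * pd e1 F p₀ + p₀.1 ^ 2 * pd e1 (pd e1 F) p₀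
      - k * (p₀.1 * pd e1 F p₀) + p₀.1 ^ 2 * ∑ i, pd (e2 i) (pd (e2 i) F) p₀ := by
  have hA : ContDiff ℝ (⊤ : ℕ∞) (pd e1 F) := pd_contDiff _ hF
  have h1 : (fun q' : Pt k r => q'.1 * D1 F q') = fun q' => q'.1 * pd e1 F q' :=
    funext fun q' => by rw [D1_eq hF]
  have hD1 : D1 (fun q' : Pt k r => q'.1 * D1 F q') p₀
      = pd e1 F p₀ + p₀.1 * pd e1 (pd e1 F) p₀ := by
    rw [h1]
    show deriv (fun s => s * pd e1 F (s, p₀.2.1, p₀.2.2)) p₀.1 = _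
    have h : HasDerivAt (fun s => s * pd e1 F (s, p₀.2.1, p₀.2.2))
        (1 * pd e1 F (p₀.1, p₀.2.1, p₀.2.2)
          + p₀.1 * pd e1 (pd e1 F) (p₀.1, p₀.2.1, p₀.2.2)) p₀.1 := by
      simpa using (hasDerivAt_id p₀.1).fun_mul (line1 hA p₀.1 p₀.2.1 p₀.2.2)
    rw [h.deriv]; ring
  have hD2 : ∀ i : Fin k, D2 (fun q' => D2 F i q') i p₀
      = pd (e2 i) (pd (e2 i) F) p₀ := by
    intro i
    have hfx : (fun q' : Pt k r => D2 F i q') = pd (e2 i) F :=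
      funext fun q' => D2_eq hF i q'
    rw [hfx, D2_eq (pd_contDiff _ hF) i p₀]
  unfold lapM
  rw [hD1, D1_eq hF, Finset.sum_congr rfl fun i _ => hD2 i]
  ring

lemma lapX_eq (hF : ContDiff ℝ (⊤ : ℕ∞) F) (p₀ : Pt k r) :
    lapX F p₀ = ∑ j, pd (e3 j) (pd (e3 j) F) p₀ := by
  unfold lapX
  refine Finset.sum_congr rfl fun j _ => ?_
  have hfx : (fun q' : Pt k r => D3 F j q') = pd (e3 j) F :=
    funext fun q' => D3_eq hF j q'
  rw [hfx, D3_eq (pd_contDiff _ hF) j p₀]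

lemma xDx_eq (hF : ContDiff ℝ (⊤ : ℕ∞) F) (p₀ : Pt k r) :
    xDx F p₀ = ∑ j, p₀.2.2 j * pd (e3 j) F p₀ := by
  unfold xDx
  exact Finset.sum_congr rfl fun j _ => by rw [D3_eq hF]

lemma xDx2_eq (hF : ContDiff ℝ (⊤ : ℕ∞) F) (p₀ : Pt k r) :
    xDx (fun q' => xDx F q') p₀
      = ∑ j, p₀.2.2 j * (pd (e3 j) F p₀
          + ∑ l, p₀.2.2 l * pd (e3 j) (pd (e3 l) F) p₀) := by
  unfold xDx
  have hfx : (fun q' : Pt k r => ∑ l, q'.2.2 l * D3 F l q')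
      = fun q' => ∑ l, q'.2.2 l * pd (e3 l) F q' :=
    funext fun q' => Finset.sum_congr rfl fun l _ => by rw [D3_eq hF]
  rw [hfx]
  refine Finset.sum_congr rfl fun j _ => ?_
  congr 1
  show deriv (fun s => ∑ l, (Function.update p₀.2.2 j s l)
      * pd (e3 l) F (p₀.1, p₀.2.1, Function.update p₀.2.2 j s)) (p₀.2.2 j) = _
  have hterm : ∀ l : Fin r, HasDerivAt
      (fun s => (Function.update p₀.2.2 j s l)
        * pd (e3 l) F (p₀.1, p₀.2.1, Function.update p₀.2.2 j s))
      ((Pi.single j (1:ℝ) : Fin r → ℝ) l * pd (e3 l) F p₀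
        + p₀.2.2 l * pd (e3 j) (pd (e3 l) F) p₀) (p₀.2.2 j) := by
    intro l
    have h1 : HasDerivAt (fun s => Function.update p₀.2.2 j s l)
        ((Pi.single j (1:ℝ) : Fin r → ℝ) l) (p₀.2.2 j) :=
      hasDerivAt_pi.1 (hasDerivAt_update p₀.2.2 j (p₀.2.2 j)) l
    have h2 := line3 (pd_contDiff (e3 l) hF) p₀.1 p₀.2.1 j p₀.2.2 (p₀.2.2 j)
    rw [Function.update_eq_self] at h2
    have h3 := h1.fun_mul h2
    simpa [Function.update_eq_self] using h3
  rw [(HasDerivAt.fun_sum fun l _ => hterm l).deriv, Finset.sum_add_distrib,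
    Finset.sum_eq_single j (fun l _ hl => by rw [Pi.single_eq_of_ne hl, zero_mul])
      (by simp), Pi.single_eq_same, one_mul]

end

section
variable {k r : ℕ} {F : Pt k r → ℝ}

lemma sqrt_curve1 {S : ℝ} (hS : 0 ≤ S) {y : ℝ} (hy : 0 < y) :
    HasDerivAt (fun s : ℝ => Real.sqrt (s ^ 2 + S)) (y / Real.sqrt (y ^ 2 + S)) y := by
  have hpos : (0:ℝ) < y ^ 2 + S := by nlinarith
  have h1 : HasDerivAt (fun s : ℝ => s ^ 2 + S) (2 * y) y := by
    simpa using (hasDerivAt_pow 2 y).add_const S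
  have := h1.sqrt hpos.ne'
  convert this using 1
  rw [eq_div_iff (by positivity)]
  field_simp

lemma LHS_w' (hF : ContDiff ℝ (⊤ : ℕ∞) F) (y : ℝ) (w' : Fin k → ℝ) (w'' : Fin r → ℝ)
    (i : Fin k) :
    D2 (fun q' => D2 (fun p : Pt k r => F (toFermi p)) i q') i (y, w', w'')
      = pd (e2 i) (pd (e2 i) F) (toFermi (y, w', w'')) := by
  have hfx : (fun q' : Pt k r => D2 (fun p => F (toFermi p)) i q')
      = fun q' => pd (e2 i) F (toFermi q') := by
    funext q'
    show deriv (fun s => F (toFermi (q'.1, Function.update q'.2.1 i s, q'.2.2)))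
      (q'.2.1 i) = _
    have h := line2 hF (Real.sqrt (q'.1 ^ 2 + ∑ j, q'.2.2 j ^ 2)) i q'.2.1
      (q'.2.1 i) (fun j => q'.2.2 j / q'.1)
    rw [Function.update_eq_self] at h
    exact h.deriv
  rw [hfx]
  show deriv (fun s => pd (e2 i) F (toFermi (y, Function.update w' i s, w''))) (w' i) = _
  have h := line2 (pd_contDiff (e2 i) hF) (Real.sqrt (y ^ 2 + ∑ j, w'' j ^ 2)) i w'
    (w' i) (fun j => w'' j / y)
  rw [Function.update_eq_self] at h
  exact h.deriv

end

section
variable {k r : ℕ} {F : Pt k r → ℝ}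

lemma sqrt_curve3 (y : ℝ) (hy : 0 < y) (w'' : Fin r → ℝ) (j : Fin r) :
    HasDerivAt (fun s : ℝ => Real.sqrt (y ^ 2 + ∑ l, (Function.update w'' j s l) ^ 2))
      (w'' j / Real.sqrt (y ^ 2 + ∑ l, w'' l ^ 2)) (w'' j) := by
  set S := ∑ l, w'' l ^ 2 with hS
  have hpos : (0:ℝ) < y ^ 2 + S := by
    have : (0:ℝ) ≤ S := Finset.sum_nonneg fun l _ => sq_nonneg _
    nlinarith
  have hupd : Function.update w'' j (w'' j) = w'' := Function.update_eq_self j w''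
  have hsum : HasDerivAt (fun s : ℝ => y ^ 2 + ∑ l, (Function.update w'' j s l) ^ 2)
      (2 * w'' j) (w'' j) := by
    have h : ∀ l : Fin r, HasDerivAt (fun s : ℝ => (Function.update w'' j s l) ^ 2)
        ((Pi.single j (2 * w'' j) : Fin r → ℝ) l) (w'' j) := by
      intro l
      rcases eq_or_ne l j with h | h
      · subst h
        simp only [Function.update_self, Pi.single_eq_same]
        simpa using hasDerivAt_pow 2 (w'' l)
      · simp only [Function.update_of_ne h, Pi.single_eq_of_ne h]
        exact hasDerivAt_const _ _
    have h1 := HasDerivAt.fun_sum (fun l (_ : l ∈ Finset.univ) => h l)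
    have h2 := h1.const_add (y ^ 2)
    simpa using h2
  have hval : (y ^ 2 + ∑ l, (Function.update w'' j (w'' j) l) ^ 2) = y ^ 2 + S := by
    rw [hupd]
  have h2 := hsum.sqrt (by rw [hval]; exact hpos.ne')
  rw [hval] at h2
  convert h2 using 1
  rw [eq_div_iff (by positivity)]
  field_simp

lemma LHS_ww (hF : ContDiff ℝ (⊤ : ℕ∞) F) (y : ℝ) (hy : 0 < y) (w' : Fin k → ℝ)
    (w'' : Fin r → ℝ) (j : Fin r) :
    D3 (fun q' => D3 (fun p : Pt k r => F (toFermi p)) j q') j (y, w', w'')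
      = ((Real.sqrt (y ^ 2 + ∑ l, w'' l ^ 2) ^ 2 - w'' j ^ 2)
            / Real.sqrt (y ^ 2 + ∑ l, w'' l ^ 2) ^ 3)
          * pd e1 F (toFermi (y, w', w''))
        + (w'' j / Real.sqrt (y ^ 2 + ∑ l, w'' l ^ 2))
          * ((w'' j / Real.sqrt (y ^ 2 + ∑ l, w'' l ^ 2))
              * pd e1 (pd e1 F) (toFermi (y, w', w''))
            + (1 / y) * pd (e3 j) (pd e1 F) (toFermi (y, w', w'')))
        + (1 / y) * ((w'' j / Real.sqrt (y ^ 2 + ∑ l, w'' l ^ 2))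
              * pd (e3 j) (pd e1 F) (toFermi (y, w', w''))
            + (1 / y) * pd (e3 j) (pd (e3 j) F) (toFermi (y, w', w''))) := by
  set S := ∑ l, w'' l ^ 2 with hS
  set η := Real.sqrt (y ^ 2 + S) with hη_def
  have hη : 0 < η := eta_pos y hy w''
  have hη2 : η ^ 2 = y ^ 2 + S := Real.sq_sqrt (by positivity)
  have hfun : (fun s => D3 (fun p : Pt k r => F (toFermi p)) j (y, w', Function.update w'' j s))
      = fun s => (s / Real.sqrt (y ^ 2 + ∑ l, (Function.update w'' j s l) ^ 2))
            * pd e1 F (toFermi (y, w', Function.update w'' j s))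
          + (1 / y) * pd (e3 j) F (toFermi (y, w', Function.update w'' j s)) := by
    funext s
    show deriv (fun t => F (toFermi (y, w',
        Function.update (Function.update w'' j s) j t)))
        ((Function.update w'' j s) j) = _
    have h := (fermi3 hF y hy w' (Function.update w'' j s) j).deriv
    simp only [Function.update_idem, Function.update_self] at h ⊢
    rw [h]
  have hu : HasDerivAt
      (fun s : ℝ => s / Real.sqrt (y ^ 2 + ∑ l, (Function.update w'' j s l) ^ 2))
      ((η ^ 2 - w'' j ^ 2) / η ^ 3) (w'' j) := by
    have hne : Real.sqrt (y ^ 2 + ∑ l, (Function.update w'' j (w'' j) l) ^ 2) ≠ 0 := by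
      rw [Function.update_eq_self]; exact (eta_pos y hy w'').ne'
    have h := (hasDerivAt_id (w'' j)).fun_div (sqrt_curve3 y hy w'' j) hne
    simp only [Function.update_eq_self, id_eq, ← hS, ← hη_def] at h
    refine h.congr_deriv ?_
    field_simp
  have hv := fermi3 (pd_contDiff e1 hF) y hy w' w'' j
  have hw := fermi3 (pd_contDiff (e3 j) hF) y hy w' w'' j
  rw [pd_symm hF e1 (e3 j)] at hw
  have ht := (hu.fun_mul hv).fun_add (hw.const_mul (1 / y))
  simp only [Function.update_eq_self] at ht
  show deriv (fun s => D3 (fun p : Pt k r => F (toFermi p)) j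
      (y, w', Function.update w'' j s)) (w'' j) = _
  rw [hfun, ht.deriv]

end

section
variable {k r : ℕ} {F : Pt k r → ℝ}

lemma LHS_yy (hF : ContDiff ℝ (⊤ : ℕ∞) F) (y : ℝ) (hy : 0 < y) (w' : Fin k → ℝ)
    (w'' : Fin r → ℝ) :
    D1 (fun q' : Pt k r => q'.1 * D1 (fun p => F (toFermi p)) q') (y, w', w'')
      = ((y / Real.sqrt (y ^ 2 + ∑ l, w'' l ^ 2)) * pd e1 F (toFermi (y, w', w''))
          - ∑ j, (w'' j / y ^ 2) * pd (e3 j) F (toFermi (y, w', w'')))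
        + y * (((∑ l, w'' l ^ 2) / Real.sqrt (y ^ 2 + ∑ l, w'' l ^ 2) ^ 3)
              * pd e1 F (toFermi (y, w', w''))
            + (y / Real.sqrt (y ^ 2 + ∑ l, w'' l ^ 2))
              * ((y / Real.sqrt (y ^ 2 + ∑ l, w'' l ^ 2))
                  * pd e1 (pd e1 F) (toFermi (y, w', w''))
                - ∑ j, (w'' j / y ^ 2) * pd (e3 j) (pd e1 F) (toFermi (y, w', w'')))
            - ∑ j, (-(2 * w'' j) / y ^ 3 * pd (e3 j) F (toFermi (y, w', w''))
                + (w'' j / y ^ 2) * ((y / Real.sqrt (y ^ 2 + ∑ l, w'' l ^ 2))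
                    * pd (e3 j) (pd e1 F) (toFermi (y, w', w''))
                  - ∑ l, (w'' l / y ^ 2)
                      * pd (e3 l) (pd (e3 j) F) (toFermi (y, w', w''))))) := by
  set S := ∑ l, w'' l ^ 2 with hS
  set η := Real.sqrt (y ^ 2 + S) with hη_def
  have hS0 : (0:ℝ) ≤ S := Finset.sum_nonneg fun l _ => sq_nonneg _
  have hη : 0 < η := by rw [hη_def]; exact Real.sqrt_pos.2 (by nlinarith)
  have hη2 : η ^ 2 = y ^ 2 + S := by
    rw [hη_def]; exact Real.sq_sqrt (by nlinarith)
  -- derivative of s ↦ s / √(s² + S)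
  have hu : HasDerivAt (fun s : ℝ => s / Real.sqrt (s ^ 2 + S)) (S / η ^ 3) y := by
    have hne : Real.sqrt (y ^ 2 + S) ≠ 0 := by rw [← hη_def]; exact hη.ne'
    have h := (hasDerivAt_id y).fun_div (sqrt_curve1 hS0 hy) hne
    simp only [id_eq, ← hη_def] at h
    refine h.congr_deriv ?_
    field_simp
    linear_combination hη2
  have hA := fermi1 (pd_contDiff e1 hF) y hy w' w''
  simp only [← hS, ← hη_def] at hA
  have hterm1 := hu.fun_mul hA
  have hsum : HasDerivAt
      (fun s : ℝ => ∑ j, (w'' j / s ^ 2) * pd (e3 j) F (toFermi (s, w', w'')))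
      (∑ j, (-(2 * w'' j) / y ^ 3 * pd (e3 j) F (toFermi (y, w', w''))
        + (w'' j / y ^ 2) * ((y / η) * pd (e3 j) (pd e1 F) (toFermi (y, w', w''))
          - ∑ l, (w'' l / y ^ 2) * pd (e3 l) (pd (e3 j) F) (toFermi (y, w', w''))))) y := by
    refine HasDerivAt.fun_sum fun j _ => ?_
    have hnum : HasDerivAt (fun s : ℝ => w'' j / s ^ 2) (-(2 * w'' j) / y ^ 3) y := by
      have h := (hasDerivAt_const y (w'' j)).fun_div (hasDerivAt_pow 2 y)
        (pow_ne_zero 2 hy.ne')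
      refine h.congr_deriv ?_
      field_simp
      ring
    have hC := fermi1 (pd_contDiff (e3 j) hF) y hy w' w''
    simp only [← hS, ← hη_def] at hC
    rw [pd_symm hF e1 (e3 j)] at hC
    exact hnum.fun_mul hC
  have hφ := hterm1.fun_sub hsum
  have hev : (fun s => s * D1 (fun p : Pt k r => F (toFermi p)) (s, w', w''))
      =ᶠ[nhds y] (fun s => s * ((s / Real.sqrt (s ^ 2 + S))
          * pd e1 F (toFermi (s, w', w''))
        - ∑ j, (w'' j / s ^ 2) * pd (e3 j) F (toFermi (s, w', w'')))) := by
    filter_upwards [Ioi_mem_nhds hy] with s hs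
    have hd := (fermi1 hF s hs w' w'').deriv
    simp only [← hS] at hd
    rw [show D1 (fun p : Pt k r => F (toFermi p)) (s, w', w'')
      = deriv (fun t => F (toFermi (t, w', w''))) s from rfl, hd]
  have htot := ((hasDerivAt_id y).mul hφ).congr_of_eventuallyEq hev
  show deriv (fun s => s * D1 (fun p : Pt k r => F (toFermi p)) (s, w', w'')) y = _
  rw [htot.deriv]
  simp only [id_eq]
  ring
end

lemma final_algebra {k r : ℕ} (y η S : ℝ) (hy : 0 < y) (hη : 0 < η)
    (hη2 : η ^ 2 = y ^ 2 + S) (w'' : Fin r → ℝ) (hS : S = ∑ l, w'' l ^ 2)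
    (a aa : ℝ) (c ac : Fin r → ℝ) (cc : Fin r → Fin r → ℝ)
    (hsymm : ∀ j l, cc j l = cc l j) (bb : Fin k → ℝ) :
    y * (((y / η) * a - ∑ j, (w'' j / y ^ 2) * c j)
        + y * ((S / η ^ 3) * a
          + (y / η) * ((y / η) * aa - ∑ j, (w'' j / y ^ 2) * ac j)
          - ∑ j, (-(2 * w'' j) / y ^ 3 * c j
              + (w'' j / y ^ 2) * ((y / η) * ac j - ∑ l, (w'' l / y ^ 2) * cc l j))))
      - ((k : ℝ) + r) * (y * ((y / η) * a - ∑ j, (w'' j / y ^ 2) * c j))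
      + y ^ 2 * ((∑ i, bb i)
        + ∑ j, (((η ^ 2 - w'' j ^ 2) / η ^ 3) * a
            + (w'' j / η) * ((w'' j / η) * aa + (1 / y) * ac j)
            + (1 / y) * ((w'' j / η) * ac j + (1 / y) * cc j j)))
    = (1 / (1 + ∑ j, (w'' j / y) ^ 2))
        * (η * a + η ^ 2 * aa - k * (η * a) + η ^ 2 * ∑ i, bb i)
      + (∑ j, cc j j)
      + (∑ j, (w'' j / y) * (c j + ∑ l, (w'' l / y) * cc j l))
      + ((k : ℝ) + r) * ∑ j, (w'' j / y) * c j := by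
  set P1 := ∑ j, w'' j * c j with hP1
  set P2 := ∑ j, w'' j * ac j with hP2
  set P3 := ∑ j, ∑ l, w'' j * w'' l * cc j l with hP3
  set P4 := ∑ j, cc j j with hP4
  set P5 := ∑ i, bb i with hP5
  have ha : ∑ j, (w'' j / y ^ 2) * c j = (1 / y ^ 2) * P1 := by
    rw [hP1, Finset.mul_sum]
    exact Finset.sum_congr rfl fun j _ => by ring
  have hb : ∑ j, (w'' j / y ^ 2) * ac j = (1 / y ^ 2) * P2 := by
    rw [hP2, Finset.mul_sum]
    exact Finset.sum_congr rfl fun j _ => by ring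
  have hc : ∑ j, (-(2 * w'' j) / y ^ 3 * c j
        + (w'' j / y ^ 2) * ((y / η) * ac j - ∑ l, (w'' l / y ^ 2) * cc l j))
      = (-(2 / y ^ 3)) * P1 + (y / (y ^ 2 * η)) * P2 - (1 / y ^ 4) * P3 := by
    have hstep : ∀ j : Fin r, -(2 * w'' j) / y ^ 3 * c j
        + (w'' j / y ^ 2) * ((y / η) * ac j - ∑ l, (w'' l / y ^ 2) * cc l j)
        = (-(2 / y ^ 3)) * (w'' j * c j) + (y / (y ^ 2 * η)) * (w'' j * ac j)
          - (1 / y ^ 4) * ∑ l, w'' j * w'' l * cc j l := by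
      intro j
      have h1 : ∑ l, (w'' l / y ^ 2) * cc l j
          = (1 / y ^ 2) * ∑ l, w'' l * cc j l := by
        rw [Finset.mul_sum]
        exact Finset.sum_congr rfl fun l _ => by rw [hsymm l j]; ring
      have h2 : ∑ l, w'' j * w'' l * cc j l = w'' j * ∑ l, w'' l * cc j l := by
        rw [Finset.mul_sum]
        exact Finset.sum_congr rfl fun l _ => by ring
      rw [h1, h2]
      ring
    rw [Finset.sum_congr rfl fun j _ => hstep j, Finset.sum_sub_distrib,
      Finset.sum_add_distrib, ← Finset.mul_sum, ← Finset.mul_sum, ← Finset.mul_sum,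
      hP1, hP2, hP3]
  have hd : ∑ j, (((η ^ 2 - w'' j ^ 2) / η ^ 3) * a
        + (w'' j / η) * ((w'' j / η) * aa + (1 / y) * ac j)
        + (1 / y) * ((w'' j / η) * ac j + (1 / y) * cc j j))
      = (r : ℝ) * ((η ^ 2 / η ^ 3) * a) - (1 / η ^ 3) * (S * a)
        + (1 / η ^ 2) * (S * aa) + (2 / (y * η)) * P2 + (1 / y ^ 2) * P4 := by
    have hstep : ∀ j : Fin r, ((η ^ 2 - w'' j ^ 2) / η ^ 3) * a
        + (w'' j / η) * ((w'' j / η) * aa + (1 / y) * ac j)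
        + (1 / y) * ((w'' j / η) * ac j + (1 / y) * cc j j)
        = (η ^ 2 / η ^ 3) * a - (1 / η ^ 3) * (w'' j ^ 2 * a)
          + (1 / η ^ 2) * (w'' j ^ 2 * aa) + (2 / (y * η)) * (w'' j * ac j)
          + (1 / y ^ 2) * cc j j := by
      intro j
      ring
    rw [Finset.sum_congr rfl fun j _ => hstep j]
    rw [Finset.sum_add_distrib, Finset.sum_add_distrib, Finset.sum_add_distrib,
      Finset.sum_sub_distrib, ← Finset.mul_sum, ← Finset.mul_sum, ← Finset.mul_sum,
      ← Finset.mul_sum, Finset.sum_const, Finset.card_univ, Fintype.card_fin,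
      nsmul_eq_mul, hP2, hP4]
    have hsa : ∑ j, w'' j ^ 2 * a = S * a := by rw [hS, Finset.sum_mul]
    have hsaa : ∑ j, w'' j ^ 2 * aa = S * aa := by rw [hS, Finset.sum_mul]
    rw [hsa, hsaa, ← Finset.mul_sum, ← hP4]
    ring
  have he : ∑ j, (w'' j / y) ^ 2 = S / y ^ 2 := by
    rw [hS, Finset.sum_div]
    exact Finset.sum_congr rfl fun j _ => by rw [div_pow]
  have hf : ∑ j, (w'' j / y) * (c j + ∑ l, (w'' l / y) * cc j l)
      = (1 / y) * P1 + (1 / y ^ 2) * P3 := by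
    have hstep : ∀ j : Fin r, (w'' j / y) * (c j + ∑ l, (w'' l / y) * cc j l)
        = (1 / y) * (w'' j * c j) + (1 / y ^ 2) * ∑ l, w'' j * w'' l * cc j l := by
      intro j
      have h1 : ∑ l, (w'' l / y) * cc j l = (1 / y) * ∑ l, w'' l * cc j l := by
        rw [Finset.mul_sum]
        exact Finset.sum_congr rfl fun l _ => by ring
      have h2 : ∑ l, w'' j * w'' l * cc j l = w'' j * ∑ l, w'' l * cc j l := by
        rw [Finset.mul_sum]
        exact Finset.sum_congr rfl fun l _ => by ring
      rw [h1, h2]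
      ring
    rw [Finset.sum_congr rfl fun j _ => hstep j, Finset.sum_add_distrib,
      ← Finset.mul_sum, ← Finset.mul_sum, hP1, hP3]
  have hg : ∑ j, (w'' j / y) * c j = (1 / y) * P1 := by
    rw [hP1, Finset.mul_sum]
    exact Finset.sum_congr rfl fun j _ => by ring
  rw [ha, hb, hc, hd, he, hf, hg]
  have hS2 : S = η ^ 2 - y ^ 2 := by linarith
  rw [hS2]
  have h1 : 1 + (η ^ 2 - y ^ 2) / y ^ 2 ≠ 0 := by
    have : 1 + (η ^ 2 - y ^ 2) / y ^ 2 = η ^ 2 / y ^ 2 := by field_simp; ring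
    rw [this]
    positivity
  field_simp
  ring

/-- In Fermi coordinates `(η, w', x)` around a totally geodesic hyperbolic
submanifold, `Δ_N = (1+|x|²)^{-1} Δ_M + Δ_x + (x·∂_x)² + (n-1)(x·∂_x)`:
applying `Δ_N` to the pullback `F ∘ toFermi` of a function `F` of the Fermi
coordinates equals the decomposed operator applied to `F` at the Fermi image. -/
theorem fermi_laplacian_decomposition (k r : ℕ) (F : Pt k r → ℝ)
    (hF : ContDiff ℝ (⊤ : ℕ∞) F) (y : ℝ) (hy : 0 < y) (w' : Fin k → ℝ) (w'' : Fin r → ℝ) :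
    lapN (fun p => F (toFermi p)) (y, w', w'') =
      (1 / (1 + ∑ j, (w'' j / y) ^ 2)) * lapM F (toFermi (y, w', w'')) +
        lapX F (toFermi (y, w', w'')) +
        xDx (fun q => xDx F q) (toFermi (y, w', w'')) +
        ((k : ℝ) + r) * xDx F (toFermi (y, w', w'')) := by
  have hS0 : (0:ℝ) ≤ ∑ l, w'' l ^ 2 := Finset.sum_nonneg fun l _ => sq_nonneg _
  have hL1 : D1 (fun p : Pt k r => F (toFermi p)) (y, w', w'')
      = (y / Real.sqrt (y ^ 2 + ∑ l, w'' l ^ 2)) * pd e1 F (toFermi (y, w', w''))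
        - ∑ j, (w'' j / y ^ 2) * pd (e3 j) F (toFermi (y, w', w'')) :=
    (fermi1 hF y hy w' w'').deriv
  have hw2 : ∑ i, D2 (fun q => D2 (fun p : Pt k r => F (toFermi p)) i q) i (y, w', w'')
      = ∑ i, pd (e2 i) (pd (e2 i) F) (toFermi (y, w', w'')) :=
    Finset.sum_congr rfl fun i _ => LHS_w' hF y w' w'' i
  have hw3 : ∑ j, D3 (fun q => D3 (fun p : Pt k r => F (toFermi p)) j q) j (y, w', w'')
      = ∑ j, (((Real.sqrt (y ^ 2 + ∑ l, w'' l ^ 2) ^ 2 - w'' j ^ 2)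
            / Real.sqrt (y ^ 2 + ∑ l, w'' l ^ 2) ^ 3)
          * pd e1 F (toFermi (y, w', w''))
        + (w'' j / Real.sqrt (y ^ 2 + ∑ l, w'' l ^ 2))
          * ((w'' j / Real.sqrt (y ^ 2 + ∑ l, w'' l ^ 2))
              * pd e1 (pd e1 F) (toFermi (y, w', w''))
            + (1 / y) * pd (e3 j) (pd e1 F) (toFermi (y, w', w'')))
        + (1 / y) * ((w'' j / Real.sqrt (y ^ 2 + ∑ l, w'' l ^ 2))
              * pd (e3 j) (pd e1 F) (toFermi (y, w', w''))
            + (1 / y) * pd (e3 j) (pd (e3 j) F) (toFermi (y, w', w'')))) :=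
    Finset.sum_congr rfl fun j _ => LHS_ww hF y hy w' w'' j
  unfold lapN
  rw [LHS_yy hF y hy w' w'', hL1, hw2, hw3,
    lapM_eq hF, lapX_eq hF, xDx2_eq hF, xDx_eq hF]
  simp only [toFermi]
  exact final_algebra y (Real.sqrt (y ^ 2 + ∑ l, w'' l ^ 2)) (∑ l, w'' l ^ 2) hy
    (eta_pos y hy w'') (Real.sq_sqrt (by nlinarith)) w'' rfl
    (pd e1 F (toFermi (y, w', w''))) (pd e1 (pd e1 F) (toFermi (y, w', w'')))
    (fun j => pd (e3 j) F (toFermi (y, w', w'')))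
    (fun j => pd (e3 j) (pd e1 F) (toFermi (y, w', w'')))
    (fun j l => pd (e3 j) (pd (e3 l) F) (toFermi (y, w', w'')))
    (fun j l => pd_symm hF (e3 j) (e3 l) (toFermi (y, w', w'')))
    (fun i => pd (e2 i) (pd (e2 i) F) (toFermi (y, w', w'')))
end
end

section
/- The function s ↦ (cosh s)^{-1/2} on ℝ has strictly positive Fourier transform: for every β ∈ ℝ, ∫_ℝ e^{-isβ} (cosh s)^{-1/2} ds > 0. -/
/-!
The substitution `x = e^{2s} / (1 + e^{2s})`, i.e. `s = (log x - log (1 - x)) / 2`, gives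
`cosh s = (x (1 - x))^{-1/2} / 2`, `ds = dx / (2 x (1 - x))` and
`e^{-isβ} = x^{-iβ/2} (1 - x)^{iβ/2}`, so that
`∫ e^{-isβ} (cosh s)^{-a} ds = 2^{a-1} B(u, ū)` with `u = a/2 - iβ/2`.
Since `Γ(ū) = conj Γ(u)`, this equals `2^{a-1} |Γ(u)|² / Γ(a)`, which is positive for `a > 0`.
-/

open MeasureTheory Real Set ComplexConjugate

theorem Complex.betaIntegral_conj_right {u : ℂ} (hu : 0 < u.re) :
    Complex.betaIntegral u (conj u) =
      ((Complex.normSq (Complex.Gamma u) / Real.Gamma (2 * u.re) : ℝ) : ℂ) := by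
  have hΓ : Complex.Gamma (u + conj u) = Real.Gamma (2 * u.re) := by
    rw [Complex.add_conj, Complex.Gamma_ofReal]
  have h := Complex.Gamma_mul_Gamma_eq_betaIntegral hu (by rwa [Complex.conj_re])
  rw [Complex.Gamma_conj, Complex.mul_conj, hΓ] at h
  have hpos : (Real.Gamma (2 * u.re) : ℂ) ≠ 0 :=
    Complex.ofReal_ne_zero.mpr (Real.Gamma_pos_of_pos (by positivity)).ne'
  rw [Complex.ofReal_div, h, mul_div_cancel_left₀ _ hpos]

noncomputable def halfLogit (x : ℝ) : ℝ := (log x - log (1 - x)) / 2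

theorem halfLogit_image_Ioo : halfLogit '' Ioo 0 1 = univ := by
  refine eq_univ_of_forall fun y => ⟨(1 + exp (-(2 * y)))⁻¹, ⟨by positivity, ?_⟩, ?_⟩
  · exact inv_lt_one_of_one_lt₀ (by linarith [exp_pos (-(2 * y))])
  · have h : 1 - (1 + exp (-(2 * y)))⁻¹ = exp (-(2 * y)) * (1 + exp (-(2 * y)))⁻¹ := by
      field_simp; ring
    rw [halfLogit, h, log_mul (exp_pos _).ne' (by positivity), log_exp]
    ring

theorem strictMonoOn_halfLogit : StrictMonoOn halfLogit (Ioo 0 1) := by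
  intro a ha b hb hab
  have h₁ : log a < log b := log_lt_log ha.1 hab
  have h₂ : log (1 - b) < log (1 - a) := log_lt_log (by linarith [hb.2]) (by linarith)
  rw [halfLogit, halfLogit]
  linarith

theorem hasDerivAt_halfLogit {x : ℝ} (hx : x ∈ Ioo 0 1) :
    HasDerivAt halfLogit (2 * (x * (1 - x)))⁻¹ x := by
  have h₀ : x ≠ 0 := hx.1.ne'
  have h₁ : 1 - x ≠ 0 := by linarith [hx.2]
  have h := ((hasDerivAt_log h₀).sub (((hasDerivAt_id x).const_sub 1).log h₁)).div_const 2
  refine h.congr_deriv ?_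
  simp only [id]
  field_simp
  ring

theorem cosh_halfLogit {x : ℝ} (hx : x ∈ Ioo 0 1) :
    cosh (halfLogit x) = exp (-(log x + log (1 - x)) / 2) / 2 := by
  have h₁ : 0 < 1 - x := by linarith [hx.2]
  rw [cosh_eq, halfLogit,
    show (log x - log (1 - x)) / 2 = -(log x + log (1 - x)) / 2 + log x by ring,
    show -(-(log x + log (1 - x)) / 2 + log x) = -(log x + log (1 - x)) / 2 + log (1 - x) by ring,
    exp_add, exp_add, exp_log hx.1, exp_log h₁]
  ring

theorem inv_mul_cosh_halfLogit_rpow (a : ℝ) {x : ℝ} (hx : x ∈ Ioo 0 1) :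
    (2 * (x * (1 - x)))⁻¹ * cosh (halfLogit x) ^ (-a) =
      exp ((a - 1) * log 2 + (a / 2 - 1) * (log x + log (1 - x))) := by
  have h₀ : 0 < x := hx.1
  have h₁ : 0 < 1 - x := by linarith [hx.2]
  rw [rpow_def_of_pos (cosh_pos _), cosh_halfLogit hx, log_div (exp_pos _).ne' two_ne_zero,
    log_exp, ← exp_log (by positivity : 0 < 2 * (x * (1 - x))), ← exp_neg, ← exp_add,
    log_mul two_ne_zero (by positivity), log_mul h₀.ne' h₁.ne']
  ring_nf

theorem cexp_halfLogit_mul_cosh_rpow (a β : ℝ) {x : ℝ} (hx : x ∈ Ioo 0 1) :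
    |(2 * (x * (1 - x)))⁻¹| •
        (Complex.exp (-Complex.I * halfLogit x * β) * ((cosh (halfLogit x) ^ (-a) : ℝ) : ℂ)) =
      (((2 : ℝ) ^ (a - 1) : ℝ) : ℂ) * ((x : ℂ) ^ ((a / 2 - Complex.I * β / 2 : ℂ) - 1) *
        (1 - (x : ℂ)) ^ ((a / 2 + Complex.I * β / 2 : ℂ) - 1)) := by
  have h₁ : 0 < 1 - x := by linarith [hx.2]
  rw [abs_of_pos (by have := hx.1; positivity), Complex.real_smul, mul_left_comm,
    ← Complex.ofReal_mul, inv_mul_cosh_halfLogit_rpow a hx, rpow_def_of_pos two_pos,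
    ← Complex.ofReal_one, ← Complex.ofReal_sub,
    Complex.cpow_def_of_ne_zero (Complex.ofReal_ne_zero.mpr hx.1.ne'),
    Complex.cpow_def_of_ne_zero (Complex.ofReal_ne_zero.mpr h₁.ne'),
    ← Complex.ofReal_log hx.1.le, ← Complex.ofReal_log h₁.le,
    Complex.ofReal_exp, Complex.ofReal_exp, ← Complex.exp_add, ← Complex.exp_add,
    ← Complex.exp_add, halfLogit]
  congr 1
  push_cast
  ring

theorem integral_cexp_mul_cosh_rpow_eq_betaIntegral (a β : ℝ) :
    ∫ s : ℝ, Complex.exp (-Complex.I * s * β) * ((cosh s ^ (-a) : ℝ) : ℂ) =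
      (((2 : ℝ) ^ (a - 1) : ℝ) : ℂ) *
        Complex.betaIntegral (a / 2 - Complex.I * β / 2) (a / 2 + Complex.I * β / 2) := by
  rw [← setIntegral_univ, ← halfLogit_image_Ioo,
    integral_image_eq_integral_abs_deriv_smul measurableSet_Ioo
      (fun x hx => (hasDerivAt_halfLogit hx).hasDerivWithinAt) strictMonoOn_halfLogit.injOn,
    setIntegral_congr_fun measurableSet_Ioo (fun x hx => cexp_halfLogit_mul_cosh_rpow a β hx),
    integral_const_mul, Complex.betaIntegral, intervalIntegral.integral_of_le zero_le_one,
    integral_Ioc_eq_integral_Ioo]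

theorem integral_cexp_mul_cosh_rpow {a : ℝ} (ha : 0 < a) (β : ℝ) :
    ∫ s : ℝ, Complex.exp (-Complex.I * s * β) * ((cosh s ^ (-a) : ℝ) : ℂ) =
      (((2 : ℝ) ^ (a - 1) * Complex.normSq (Complex.Gamma (a / 2 - Complex.I * β / 2)) /
        Real.Gamma a : ℝ) : ℂ) := by
  have hconj : (a / 2 + Complex.I * β / 2 : ℂ) = conj (a / 2 - Complex.I * β / 2 : ℂ) := by
    simp only [map_sub, map_div₀, map_mul, Complex.conj_ofReal, Complex.conj_I, map_ofNat]
    ring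
  have hre : (a / 2 - Complex.I * β / 2 : ℂ).re = a / 2 := by simp
  rw [integral_cexp_mul_cosh_rpow_eq_betaIntegral, hconj,
    Complex.betaIntegral_conj_right (by rw [hre]; positivity), hre, mul_div_cancel₀ a two_ne_zero]
  push_cast
  ring

/-- The function `s ↦ (cosh s)^{-1/2}` has strictly positive Fourier transform:
for every `β ∈ ℝ`, the integral `∫ e^{-isβ}(cosh s)^{-1/2} ds` is a strictly
positive real number. -/
theorem cosh_rpow_fourier_positive (β : ℝ) :
    0 < (∫ s : ℝ, Complex.exp (-Complex.I * s * β) *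
          (Real.cosh s ^ (-(1 : ℝ) / 2) : ℝ)).re ∧
    (∫ s : ℝ, Complex.exp (-Complex.I * s * β) *
          (Real.cosh s ^ (-(1 : ℝ) / 2) : ℝ)).im = 0 := by
  have hΓ : Complex.Gamma ((1 / 2 : ℝ) / 2 - Complex.I * β / 2) ≠ 0 :=
    Complex.Gamma_ne_zero_of_re_pos (by norm_num)
  rw [neg_div, integral_cexp_mul_cosh_rpow one_half_pos, Complex.ofReal_re, Complex.ofReal_im]
  refine ⟨div_pos (mul_pos (by positivity) (Complex.normSq_pos.mpr hΓ)) ?_, rfl⟩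
  exact Real.Gamma_pos_of_pos one_half_pos
end
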